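/- For purely imaginary τ = it (t > 0), θ₁(it)² < θ₀(it)² and the arithmetic-geometric mean satisfies μ₁(θ₀(it)², θ₁(it)²) = 1. -/

import Mathlib

open Filter

noncomputable def jacobiTheta' (i : ℕ) (τ : ℂ) : ℂ :=
  ∑' n : ℤ, Complex.exp (Real.pi * Complex.I * ((n : ℂ) ^ 2 * τ + (i : ℂ) * (n : ℂ)))

noncomputable def agmSeq (a0 a1 : ℝ) : ℕ → ℝ × ℝ
  | 0 => (a0, a1)
  | n + 1 => (((agmSeq a0 a1 n).1 + (agmSeq a0 a1 n).2) / 2,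
      Real.sqrt ((agmSeq a0 a1 n).1 * (agmSeq a0 a1 n).2))

/-!
On the imaginary axis θ₀(it) and θ₁(it) are the real kernels `cosKernel 0 t` and
`cosKernel (1/2) t` of Mathlib's Hurwitz zeta theory. Multiplying two theta series and substituting
(m, n) = (a + b, a - b) in the double sum, whose terms with m + n odd cancel in pairs, gives the
duplication formulas 2 θ₀(2τ)² = θ₀(τ)² + θ₁(τ)² and θ₁(2τ)² = θ₀(τ) θ₁(τ). So the n-th AGM iterate
of (θ₀(it)², θ₁(it)²) is (θ₀(2ⁿit)², θ₁(2ⁿit)²), without any need to know the sign of θ₁, since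
√(θ₀² θ₁²) = |θ₀ θ₁| = θ₁(2τ)². Its first component tends to 1 because θ₀(it) → 1 as t → ∞.
The inequality θ₁(it)² < θ₀(it)² is a termwise comparison of the series.
-/

section NegOnePow

variable {R : Type*} [DivisionRing R]

lemma neg_one_zpow_sub (a b : ℤ) : (-1 : R) ^ (a - b) = (-1) ^ (a + b) := by
  simp only [neg_one_zpow_eq_ite, Int.even_add, Int.even_sub]

lemma neg_one_zpow_mul_neg_one_zpow_of_odd {a b : ℤ} (h : Odd (a + b)) :
    (-1 : R) ^ a * (-1) ^ b = -1 := by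
  rw [← zpow_add₀ (by simp), h.neg_one_zpow]

lemma neg_one_zpow_add_neg_one_zpow_of_odd {a b : ℤ} (h : Odd (a + b)) :
    (-1 : R) ^ a + (-1) ^ b = 0 := by
  rw [Int.odd_add] at h
  simp only [neg_one_zpow_eq_ite, ← Int.not_odd_iff_even, h]
  split_ifs <;> simp

end NegOnePow

section

open Complex

lemma jacobiTheta₂_term_half (n : ℤ) (τ : ℂ) :
    jacobiTheta₂_term n (1 / 2) τ = (-1) ^ n * jacobiTheta₂_term n 0 τ := by
  rw [jacobiTheta₂_term, jacobiTheta₂_term, ← exp_pi_mul_I, ← exp_int_mul, ← Complex.exp_add]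
  ring_nf

lemma jacobiTheta₂_term_add_mul_sub (m n : ℤ) (τ : ℂ) :
    jacobiTheta₂_term (m + n) 0 τ * jacobiTheta₂_term (m - n) 0 τ =
      jacobiTheta₂_term m 0 (2 * τ) * jacobiTheta₂_term n 0 (2 * τ) := by
  simp only [jacobiTheta₂_term, ← Complex.exp_add]
  push_cast
  ring_nf

lemma summable_norm_jacobiTheta₂_term (z : ℂ) {τ : ℂ} (hτ : 0 < τ.im) :
    Summable fun n ↦ ‖jacobiTheta₂_term n z τ‖ :=
  summable_norm_iff.2 ((summable_jacobiTheta₂_term_iff z τ).2 hτ)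

lemma tsum_add_sub_eq_tsum_of_odd_eq_zero {E : Type*} [AddCommMonoid E] [TopologicalSpace E]
    {f : ℤ × ℤ → E} (hf : ∀ p : ℤ × ℤ, Odd (p.1 + p.2) → f p = 0) :
    ∑' q : ℤ × ℤ, f (q.1 + q.2, q.1 - q.2) = ∑' p, f p := by
  refine Function.Injective.tsum_eq (g := fun q : ℤ × ℤ ↦ (q.1 + q.2, q.1 - q.2)) ?_ ?_
  · rintro ⟨a, b⟩ ⟨c, d⟩ h
    simp only [Prod.mk.injEq] at h ⊢
    omega
  · intro p hp
    obtain ⟨k, hk⟩ := Int.not_odd_iff_even.1 (mt (hf p) hp)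
    exact ⟨(k, p.1 - k), by ext <;> dsimp only <;> omega⟩

lemma tsum_mul_tsum_add_tsum_mul_tsum {ι κ R : Type*} [NormedRing R] [CompleteSpace R]
    {f f' : ι → R} {g g' : κ → R} (hf : Summable fun i ↦ ‖f i‖) (hg : Summable fun j ↦ ‖g j‖)
    (hf' : Summable fun i ↦ ‖f' i‖) (hg' : Summable fun j ↦ ‖g' j‖) :
    (∑' i, f i) * (∑' j, g j) + (∑' i, f' i) * (∑' j, g' j) =
      ∑' p : ι × κ, (f p.1 * g p.2 + f' p.1 * g' p.2) := by
  rw [tsum_mul_tsum_of_summable_norm hf hg, tsum_mul_tsum_of_summable_norm hf' hg',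
    Summable.tsum_add (summable_mul_of_summable_norm hf hg) (summable_mul_of_summable_norm hf' hg')]

variable {τ : ℂ}

theorem jacobiTheta₂_zero_two_mul_sq (hτ : 0 < τ.im) :
    2 * jacobiTheta₂ 0 (2 * τ) ^ 2 = jacobiTheta₂ 0 τ ^ 2 + jacobiTheta₂ (1 / 2) τ ^ 2 := by
  have hA := summable_norm_jacobiTheta₂_term 0 hτ
  have hB := summable_norm_jacobiTheta₂_term (1 / 2) hτ
  have hA₂ := summable_norm_jacobiTheta₂_term 0 (τ := 2 * τ) (by simpa using hτ)
  have hodd (p : ℤ × ℤ) (hp : Odd (p.1 + p.2)) :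
      jacobiTheta₂_term p.1 0 τ * jacobiTheta₂_term p.2 0 τ +
        jacobiTheta₂_term p.1 (1 / 2) τ * jacobiTheta₂_term p.2 (1 / 2) τ = 0 := by
    simp only [jacobiTheta₂_term_half]
    linear_combination (jacobiTheta₂_term p.1 0 τ * jacobiTheta₂_term p.2 0 τ) *
      neg_one_zpow_mul_neg_one_zpow_of_odd (R := ℂ) hp
  rw [sq, sq, sq, jacobiTheta₂, jacobiTheta₂, jacobiTheta₂,
    tsum_mul_tsum_add_tsum_mul_tsum hA hA hB hB, tsum_mul_tsum_of_summable_norm hA₂ hA₂,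
    ← tsum_mul_left, ← tsum_add_sub_eq_tsum_of_odd_eq_zero hodd]
  refine tsum_congr fun q ↦ ?_
  have hsign : (-1 : ℂ) ^ (q.1 + q.2) * (-1) ^ (q.1 - q.2) = 1 := by
    rw [neg_one_zpow_sub, ← zpow_add₀ (by simp), Even.neg_one_zpow ⟨_, rfl⟩]
  simp only [jacobiTheta₂_term_half]
  linear_combination (-(1 + (-1) ^ (q.1 + q.2) * (-1) ^ (q.1 - q.2) : ℂ)) *
    jacobiTheta₂_term_add_mul_sub q.1 q.2 τ -
    jacobiTheta₂_term q.1 0 (2 * τ) * jacobiTheta₂_term q.2 0 (2 * τ) * hsign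

theorem jacobiTheta₂_half_two_mul_sq (hτ : 0 < τ.im) :
    jacobiTheta₂ (1 / 2) (2 * τ) ^ 2 = jacobiTheta₂ 0 τ * jacobiTheta₂ (1 / 2) τ := by
  have hA := summable_norm_jacobiTheta₂_term 0 hτ
  have hB := summable_norm_jacobiTheta₂_term (1 / 2) hτ
  have hB₂ := summable_norm_jacobiTheta₂_term (1 / 2) (τ := 2 * τ) (by simpa using hτ)
  have hodd (p : ℤ × ℤ) (hp : Odd (p.1 + p.2)) :
      jacobiTheta₂_term p.1 0 τ * jacobiTheta₂_term p.2 (1 / 2) τ +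
        jacobiTheta₂_term p.1 (1 / 2) τ * jacobiTheta₂_term p.2 0 τ = 0 := by
    simp only [jacobiTheta₂_term_half]
    linear_combination (jacobiTheta₂_term p.1 0 τ * jacobiTheta₂_term p.2 0 τ) *
      neg_one_zpow_add_neg_one_zpow_of_odd (R := ℂ) hp
  suffices 2 * jacobiTheta₂ (1 / 2) (2 * τ) ^ 2 =
      jacobiTheta₂ 0 τ * jacobiTheta₂ (1 / 2) τ + jacobiTheta₂ (1 / 2) τ * jacobiTheta₂ 0 τ by
    linear_combination this / 2
  rw [sq, jacobiTheta₂, jacobiTheta₂, jacobiTheta₂,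
    tsum_mul_tsum_add_tsum_mul_tsum hA hB hB hA, tsum_mul_tsum_of_summable_norm hB₂ hB₂,
    ← tsum_mul_left, ← tsum_add_sub_eq_tsum_of_odd_eq_zero hodd]
  refine tsum_congr fun q ↦ ?_
  simp only [jacobiTheta₂_term_half, neg_one_zpow_sub, zpow_add₀ (by simp : (-1 : ℂ) ≠ 0)]
  linear_combination
    (-2 * (-1) ^ q.1 * (-1) ^ q.2 : ℂ) * jacobiTheta₂_term_add_mul_sub q.1 q.2 τ

end

namespace HurwitzZeta

open Real

lemma cosKernel_lt_cosKernel_zero {a : ℝ} (ha : cos (2 * π * a) < 1) {t : ℝ} (ht : 0 < t) :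
    cosKernel a t < cosKernel 0 t := by
  have h := hasSum_lt (i := 0) (fun n ↦ ?_) ?_ (hasSum_nat_cosKernel₀ a ht)
    (hasSum_nat_cosKernel₀ 0 ht)
  · simpa using h
  · simp only [mul_zero, zero_mul, cos_zero, mul_one]
    exact mul_le_mul_of_nonneg_right (by linarith [cos_le_one (2 * π * a * (n + 1))])
      (exp_pos _).le
  · simp only [Nat.cast_zero, zero_add, mul_one, mul_zero, cos_zero]
    exact mul_lt_mul_of_pos_right (by linarith) (exp_pos _)

lemma neg_cosKernel_zero_lt_cosKernel (a : ℝ) {t : ℝ} (ht : 0 < t) :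
    -cosKernel 0 t < cosKernel a t := by
  have h := ((hasSum_nat_cosKernel₀ a ht).add (hasSum_nat_cosKernel₀ 0 ht)).nonneg fun n ↦ ?_
  · simp only [QuotientAddGroup.mk_zero] at h
    linarith
  · simp only [mul_zero, zero_mul, cos_zero, mul_one, ← add_mul]
    exact mul_nonneg (by linarith [neg_one_le_cos (2 * π * a * (n + 1))]) (exp_pos _).le

lemma ofReal_cosKernel_zero (t : ℝ) : (cosKernel 0 t : ℂ) = jacobiTheta₂ 0 (Complex.I * t) := by
  simpa using cosKernel_def 0 t

lemma ofReal_cosKernel_half (t : ℝ) :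
    (cosKernel (1 / 2 : ℝ) t : ℂ) = jacobiTheta₂ (1 / 2) (Complex.I * t) := by
  simpa using cosKernel_def (1 / 2) t

lemma cosKernel_zero_two_mul_sq {t : ℝ} (ht : 0 < t) :
    cosKernel 0 (2 * t) ^ 2 = (cosKernel 0 t ^ 2 + cosKernel (1 / 2 : ℝ) t ^ 2) / 2 := by
  apply Complex.ofReal_injective
  push_cast
  rw [ofReal_cosKernel_zero, ofReal_cosKernel_zero, ofReal_cosKernel_half,
    ← jacobiTheta₂_zero_two_mul_sq (by simpa using ht)]
  push_cast
  ring_nf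

lemma cosKernel_half_two_mul_sq {t : ℝ} (ht : 0 < t) :
    cosKernel (1 / 2 : ℝ) (2 * t) ^ 2 = cosKernel 0 t * cosKernel (1 / 2 : ℝ) t := by
  apply Complex.ofReal_injective
  push_cast
  rw [ofReal_cosKernel_zero, ofReal_cosKernel_half, ofReal_cosKernel_half,
    ← jacobiTheta₂_half_two_mul_sq (by simpa using ht)]
  push_cast
  ring_nf

lemma tendsto_cosKernel_atTop (a : UnitAddCircle) : Tendsto (cosKernel a) atTop (nhds 1) := by
  obtain ⟨p, hp, hO⟩ := isBigO_atTop_cosKernel_sub a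
  have hexp : Tendsto (fun x ↦ exp (-p * x)) atTop (nhds 0) := by
    simpa only [neg_mul, Function.comp_def] using
      tendsto_exp_neg_atTop_nhds_zero.comp (tendsto_id.const_mul_atTop hp : Tendsto (p * ·) _ _)
  simpa using (hO.trans_tendsto hexp).add_const 1

end HurwitzZeta

lemma jacobiTheta'_eq_jacobiTheta₂ (i : ℕ) (τ : ℂ) :
    jacobiTheta' i τ = jacobiTheta₂ (i / 2) τ := by
  refine tsum_congr fun n ↦ ?_
  rw [jacobiTheta₂_term]
  ring_nf

lemma jacobiTheta'_zero_mul_I (t : ℝ) :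
    jacobiTheta' 0 (t * Complex.I) = HurwitzZeta.cosKernel 0 t := by
  rw [jacobiTheta'_eq_jacobiTheta₂, HurwitzZeta.ofReal_cosKernel_zero, mul_comm]
  simp

lemma jacobiTheta'_one_mul_I (t : ℝ) :
    jacobiTheta' 1 (t * Complex.I) = HurwitzZeta.cosKernel (1 / 2 : ℝ) t := by
  rw [jacobiTheta'_eq_jacobiTheta₂, HurwitzZeta.ofReal_cosKernel_half, mul_comm]
  simp

lemma agmSeq_sq_eq {a b : ℕ → ℝ} (ha : ∀ n, a (n + 1) ^ 2 = (a n ^ 2 + b n ^ 2) / 2)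
    (hb : ∀ n, b (n + 1) ^ 2 = a n * b n) (n : ℕ) :
    agmSeq (a 0 ^ 2) (b 0 ^ 2) n = (a n ^ 2, b n ^ 2) := by
  induction n with
  | zero => rfl
  | succ n ih =>
    rw [agmSeq, ih, ha, ← mul_pow, Real.sqrt_sq_eq_abs, ← hb, abs_sq]

theorem stmt_8 (t : ℝ) (ht : 0 < t) :
    (jacobiTheta' 1 (t * Complex.I) ^ 2).re < (jacobiTheta' 0 (t * Complex.I) ^ 2).re ∧
    ∀ l : ℝ,
      Tendsto (fun n => (agmSeq ((jacobiTheta' 0 (t * Complex.I) ^ 2).re)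
        ((jacobiTheta' 1 (t * Complex.I) ^ 2).re) n).1) atTop (nhds l) →
      Tendsto (fun n => (agmSeq ((jacobiTheta' 0 (t * Complex.I) ^ 2).re)
        ((jacobiTheta' 1 (t * Complex.I) ^ 2).re) n).2) atTop (nhds l) →
      l = 1 := by
  open HurwitzZeta in
  simp only [jacobiTheta'_zero_mul_I, jacobiTheta'_one_mul_I, ← Complex.ofReal_pow,
    Complex.ofReal_re]
  have hcos : Real.cos (2 * Real.pi * (1 / 2)) < 1 := by
    rw [show 2 * Real.pi * (1 / 2) = Real.pi by ring, Real.cos_pi]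
    norm_num
  refine ⟨sq_lt_sq' (neg_cosKernel_zero_lt_cosKernel _ ht) (cosKernel_lt_cosKernel_zero hcos ht),
    fun l hl _ ↦ ?_⟩
  have h2t (n : ℕ) : (0 : ℝ) < 2 ^ n * t := by positivity
  have hagm := agmSeq_sq_eq (a := fun n ↦ cosKernel 0 (2 ^ n * t))
    (b := fun n ↦ cosKernel (1 / 2 : ℝ) (2 ^ n * t))
    (fun n ↦ by simpa [pow_succ', mul_assoc] using cosKernel_zero_two_mul_sq (h2t n))
    (fun n ↦ by simpa [pow_succ', mul_assoc] using cosKernel_half_two_mul_sq (h2t n))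
  simp only [pow_zero, one_mul] at hagm
  simp only [hagm] at hl
  have hlim : Tendsto (fun n : ℕ ↦ cosKernel 0 (2 ^ n * t) ^ 2) atTop (nhds 1) := by
    simpa using ((tendsto_cosKernel_atTop 0).comp
      ((tendsto_pow_atTop_atTop_of_one_lt one_lt_two).atTop_mul_const ht)).pow 2
  exact tendsto_nhds_unique hl hlim
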